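/- Let F be a family of continuously differentiable real-valued functions on a compact metric measure space (X, d, ν) with ν a probability measure, and suppose there exist constants α > 0 and M > 0 such that ∫ exp(α |φ|) dν ≤ M for all φ ∈ F. Suppose moreover that every ball of radius r ≤ 1 in X has ν-measure at least c·r^D for constants c > 0, D > 0. Then there is a constant A₀ > 0 such that for every φ ∈ F, ‖φ‖_∞ ≤ A₀ (1 + log⁺ ‖∇φ‖_∞), where ∇φ denotes the gradient (or the Lipschitz constant of φ) and log⁺ t = max(0, log t). -/

import Mathlib

open MeasureTheory Metric Real

/-!
If `|φ x| = t` and `φ` is `K`-Lipschitz, then `|φ| ≥ t - 1/2` on the ball of radius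
`r = 1 / (2 (K + 1))` around `x`. Markov's inequality for `exp (α |φ|)` and the lower volume
bound give `exp (α (t - 1/2)) · c r^D ≤ M`, and taking logarithms yields
`t ≤ 1/2 + (log⁺ (M / c) + D log (2 (K + 1))) / α`, which is `O(1 + log⁺ K)`.
-/

theorem LipschitzWith.abs_sub_mul_le_abs_of_mem_ball {X : Type*} [PseudoMetricSpace X]
    {K : NNReal} {φ : X → ℝ} (hφ : LipschitzWith K φ) {x y : X} {r : ℝ} (hy : y ∈ ball x r) :
    |φ x| - K * r ≤ |φ y| := by
  have hdist : |φ x - φ y| ≤ K * dist x y := by simpa [Real.dist_eq] using hφ.dist_le_mul x y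
  have hr : K * dist x y ≤ K * r := mul_le_mul_of_nonneg_left (mem_ball'.1 hy).le K.coe_nonneg
  linarith [abs_sub_abs_le_abs_sub (φ x) (φ y)]

theorem LipschitzWith.exp_mul_measureReal_ball_le_integral {X : Type*} [PseudoMetricSpace X]
    [MeasurableSpace X] (ν : Measure X) [IsFiniteMeasure ν] {K : NNReal} {φ : X → ℝ}
    (hφ : LipschitzWith K φ) {α : ℝ} (hα : 0 ≤ α)
    (hint : Integrable (fun y => exp (α * |φ y|)) ν) (x : X) (r : ℝ) :
    exp (α * (|φ x| - K * r)) * ν.real (ball x r) ≤ ∫ y, exp (α * |φ y|) ∂ν := by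
  refine le_trans ?_ (mul_meas_ge_le_integral_of_nonneg
    (ae_of_all _ fun y => (exp_pos _).le) hint (exp (α * (|φ x| - K * r))))
  refine mul_le_mul_of_nonneg_left (measureReal_mono fun y hy => ?_) (exp_pos _).le
  exact exp_le_exp.2 (mul_le_mul_of_nonneg_left (hφ.abs_sub_mul_le_abs_of_mem_ball hy) hα)

theorem LipschitzWith.mul_sub_le_log_of_measureReal_ball_ge {X : Type*} [PseudoMetricSpace X]
    [MeasurableSpace X] (ν : Measure X) [IsFiniteMeasure ν] {K : NNReal} {φ : X → ℝ}
    (hφ : LipschitzWith K φ) {α M c D r : ℝ} (hα : 0 ≤ α) (hc : 0 < c) (hr : 0 < r)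
    (hint : Integrable (fun y => exp (α * |φ y|)) ν) (hexp : ∫ y, exp (α * |φ y|) ∂ν ≤ M)
    {x : X} (hball : c * r ^ D ≤ ν.real (ball x r)) :
    α * (|φ x| - K * r) ≤ log (M / c) - D * log r := by
  have hrD : 0 < r ^ D := rpow_pos_of_pos hr D
  have hbound : exp (α * (|φ x| - K * r)) * (c * r ^ D) ≤ M :=
    (mul_le_mul_of_nonneg_left hball (exp_pos _).le).trans
      ((hφ.exp_mul_measureReal_ball_le_integral ν hα hint x r).trans hexp)
  have hM : 0 < M := lt_of_lt_of_le (by positivity) hbound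
  have hlog : α * (|φ x| - K * r) ≤ log (M / c / r ^ D) := by
    rw [le_log_iff_exp_le (by positivity), div_div, le_div_iff₀ (by positivity)]
    exact hbound
  rwa [log_div (by positivity) hrD.ne', log_rpow hr] at hlog

theorem log_two_mul_add_one_le {K : ℝ} (hK : 0 ≤ K) : log (2 * (K + 1)) ≤ 2 * log 2 + log⁺ K := by
  have hK1 : log (K + 1) ≤ log 2 + log⁺ K := by
    simpa using (le_max_right 0 (log (K + 1))).trans (posLog_add (x := K) (y := 1))
  rw [log_mul two_ne_zero (by positivity)]
  linarith

theorem LipschitzWith.abs_le_of_integral_exp_le {X : Type*} [PseudoMetricSpace X]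
    [CompactSpace X] [MeasurableSpace X] [OpensMeasurableSpace X] (ν : Measure X)
    [IsFiniteMeasure ν] {K : NNReal} {φ : X → ℝ} (hφ : LipschitzWith K φ) {α M c D : ℝ}
    (hα : 0 < α) (hc : 0 < c) (hD : 0 ≤ D) (hexp : ∫ y, exp (α * |φ y|) ∂ν ≤ M)
    (hvol : ∀ (x : X) (r : ℝ), 0 < r → r ≤ 1 → c * r ^ D ≤ ν.real (ball x r)) (x : X) :
    |φ x| ≤ 1 / 2 + (log⁺ (M / c) + 2 * D * log 2 + D * log⁺ K) / α := by
  have hint : Integrable (fun y => exp (α * |φ y|)) ν :=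
    (continuous_exp.comp (continuous_const.mul hφ.continuous.abs)).integrable_of_hasCompactSupport
      (.of_compactSpace _)
  set r : ℝ := (2 * (K + 1))⁻¹
  have hr : 0 < r := by positivity
  have hr1 : r ≤ 1 := inv_le_one_of_one_le₀ (by linarith [K.coe_nonneg])
  have hKr : K * r ≤ 1 / 2 := by
    rw [← div_eq_mul_inv, div_le_iff₀ (by positivity)]
    linarith
  have hlogr : -log r ≤ 2 * log 2 + log⁺ K := by
    rw [log_inv, neg_neg]
    exact log_two_mul_add_one_le K.coe_nonneg
  have hmain := hφ.mul_sub_le_log_of_measureReal_ball_ge ν hα.le hc hr hint hexp (hvol x r hr hr1)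
  have hlogMc : log (M / c) ≤ log⁺ (M / c) := le_max_right _ _
  rw [← sub_le_iff_le_add', le_div_iff₀ hα, mul_comm]
  nlinarith [mul_le_mul_of_nonneg_left hlogr hD]

theorem stmt2_general {X : Type*} [MetricSpace X] [CompactSpace X] [MeasurableSpace X]
    [BorelSpace X] (ν : Measure X) [IsProbabilityMeasure ν]
    (F : Set (X → ℝ)) (α M c D : ℝ) (hα : 0 < α) (hc : 0 < c) (hD : 0 < D)
    (hexp : ∀ φ ∈ F, ∫ x, Real.exp (α * |φ x|) ∂ν ≤ M)
    (hvol : ∀ (x : X) (r : ℝ), 0 < r → r ≤ 1 → c * r ^ D ≤ (ν (Metric.ball x r)).toReal) :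
    ∃ A₀ > 0, ∀ φ ∈ F, ∀ K : NNReal, LipschitzWith K φ →
      ∀ x : X, |φ x| ≤ A₀ * (1 + max 0 (Real.log K)) := by
  set C₀ := 1 / 2 + (log⁺ (M / c) + 2 * D * log 2) / α
  have hC₀ : 0 < C₀ := by
    have := log_pos one_lt_two
    have : 0 ≤ log⁺ (M / c) := posLog_nonneg
    positivity
  refine ⟨C₀ + D / α, by positivity, fun φ hφ K hK x => ?_⟩
  have hbound := hK.abs_le_of_integral_exp_le ν hα hc hD.le (hexp φ hφ) hvol x
  have hL : 0 ≤ log⁺ (K : ℝ) := posLog_nonneg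
  change |φ x| ≤ (C₀ + D / α) * (1 + log⁺ (K : ℝ))
  rw [add_div, ← add_assoc, mul_div_right_comm] at hbound
  change |φ x| ≤ C₀ + D / α * log⁺ (K : ℝ) at hbound
  nlinarith [mul_nonneg hC₀.le hL, div_nonneg hD.le hα.le]

/-- Uniform exponential integrability plus lower volume regularity on a compact metric
probability space imply the bound `‖φ‖_∞ ≤ A₀ (1 + log⁺ ‖∇φ‖_∞)` for Lipschitz functions
of the family, where `‖∇φ‖_∞` is a Lipschitz constant of `φ`. -/
theorem stmt2 {X : Type*} [MetricSpace X] [CompactSpace X] [MeasurableSpace X]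
    [BorelSpace X] (ν : Measure X) [IsProbabilityMeasure ν]
    (F : Set (X → ℝ)) (α M c D : ℝ) (hα : 0 < α) (hM : 0 < M) (hc : 0 < c) (hD : 0 < D)
    (hexp : ∀ φ ∈ F, ∫ x, Real.exp (α * |φ x|) ∂ν ≤ M)
    (hvol : ∀ (x : X) (r : ℝ), 0 < r → r ≤ 1 → c * r ^ D ≤ (ν (Metric.ball x r)).toReal) :
    ∃ A₀ > 0, ∀ φ ∈ F, ∀ K : NNReal, LipschitzWith K φ →
      ∀ x : X, |φ x| ≤ A₀ * (1 + max 0 (Real.log K)) :=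
  stmt2_general ν F α M c D hα hc hD hexp hvol
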